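/- arXiv:1906.07594 — 2 statements merged into one kernel-verified Lean document; each statement's English description precedes it below -/
import Mathlib

section
/- If p_1,…,p_n are elements of a Boolean algebra of S-probabilities and f is a Bell valuation on 2^N, then 0 ≤ ∑_{∅≠I⊆N} f(I)·p_I ≤ 1 pointwise on S, where p_I := ⋀_{i∈I} p_i. In the special case where f is the sum of all elementary Bell valuations, this yields 0 ≤ ∑_{∅≠I⊆N} (-1)^{|I|+1} p_I ≤ 1. -/
/-!
At a point `s` the indicator of `⋂ i ∈ I, A i` is `1` exactly when `I ⊆ K := {i | s ∈ A i}`,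
so the weighted sum collapses to `∑_{∅ ≠ J ⊆ K} f J`, which lies in `[0, 1]` by the Bell
condition for `K` (and is the empty sum when `K = ∅`). For `f I = (-1)^(|I|+1)` this partial
sum equals `1 - ∑_{J ⊆ K} (-1)^|J| = 1`.
-/

open Finset

section

variable {ι S : Type*}

def IsBellValuation (f : Finset ι → ℝ) : Prop :=
  ∀ K : Finset ι, K.Nonempty →
    0 ≤ ∑ J ∈ K.powerset.filter Finset.Nonempty, f J ∧
    ∑ J ∈ K.powerset.filter Finset.Nonempty, f J ≤ 1

theorem sum_powerset_filter_nonempty_neg_one_pow_card_succ {K : Finset ι} (hK : K.Nonempty) :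
    ∑ J ∈ K.powerset.filter Finset.Nonempty, (-1 : ℝ) ^ (J.card + 1) = 1 := by
  classical
  have hempty : K.powerset.filter (¬ ·.Nonempty) = {∅} := by
    ext J
    simp only [mem_filter, mem_powerset, not_nonempty_iff_eq_empty, mem_singleton]
    exact ⟨And.right, fun h => ⟨h ▸ empty_subset K, h⟩⟩
  have htotal : ∑ J ∈ K.powerset, (-1 : ℝ) ^ (J.card + 1) = 0 := by
    simp only [pow_succ, ← Finset.sum_mul]
    exact_mod_cast congrArg (· * (-1 : ℤ)) (sum_powerset_neg_one_pow_card_of_nonempty hK)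
  rw [← sum_filter_add_sum_filter_not _ Finset.Nonempty, hempty, sum_singleton] at htotal
  simp only [card_empty, zero_add, pow_one] at htotal
  linarith

theorem isBellValuation_neg_one_pow_card_succ :
    IsBellValuation (fun J : Finset ι => (-1 : ℝ) ^ (J.card + 1)) := fun K hK => by
  rw [sum_powerset_filter_nonempty_neg_one_pow_card_succ hK]
  exact ⟨zero_le_one, le_rfl⟩

theorem sum_mul_indicator_biInter_eq [Fintype ι] [DecidableEq ι] (f : Finset ι → ℝ)
    (A : ι → Set S) (s : S) [DecidablePred (s ∈ A ·)] :
    ∑ I ∈ (univ : Finset ι).powerset.filter Finset.Nonempty,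
        f I * Set.indicator (⋂ i ∈ I, A i) (fun _ => (1 : ℝ)) s
      = ∑ J ∈ (univ.filter (s ∈ A ·)).powerset.filter Finset.Nonempty, f J := by
  have hindicator : ∀ I : Finset ι, Set.indicator (⋂ i ∈ I, A i) (fun _ => (1 : ℝ)) s
      = if I ⊆ univ.filter (s ∈ A ·) then 1 else 0 := fun I => by
    have hmem : s ∈ ⋂ i ∈ I, A i ↔ I ⊆ univ.filter (s ∈ A ·) := by
      simp only [Set.mem_iInter₂, subset_iff, mem_filter, mem_univ, true_and]
    split_ifs with hI
    · exact Set.indicator_of_mem (hmem.2 hI) _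
    · exact Set.indicator_of_notMem (mt hmem.1 hI) _
  simp_rw [hindicator, mul_ite, mul_one, mul_zero, ← sum_filter, filter_filter]
  congr 1
  ext J
  simp only [mem_filter, mem_powerset, subset_univ, true_and]
  tauto

theorem IsBellValuation.sum_mul_indicator_biInter_mem_Icc [Fintype ι] {f : Finset ι → ℝ}
    (hf : IsBellValuation f) (A : ι → Set S) (s : S) :
    ∑ I ∈ (univ : Finset ι).powerset.filter Finset.Nonempty,
        f I * Set.indicator (⋂ i ∈ I, A i) (fun _ => (1 : ℝ)) s ∈ Set.Icc 0 1 := by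
  classical
  rw [sum_mul_indicator_biInter_eq]
  rcases (univ.filter (s ∈ A ·)).eq_empty_or_nonempty with hK | hK
  · simp [hK, filter_singleton]
  · exact hf _ hK

end

theorem stmt_7_general {S : Type*} (n : ℕ) (A : Fin n → Set S)
    (f : Finset (Fin n) → ℝ)
    (hf : ∀ K : Finset (Fin n), K.Nonempty →
      0 ≤ ∑ J ∈ K.powerset.filter Finset.Nonempty, f J ∧
      ∑ J ∈ K.powerset.filter Finset.Nonempty, f J ≤ 1)
    (s : S) :
    (0 ≤ ∑ I ∈ (univ : Finset (Fin n)).powerset.filter Finset.Nonempty,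
        f I * Set.indicator (⋂ i ∈ I, A i) (fun _ => (1 : ℝ)) s ∧
      ∑ I ∈ (univ : Finset (Fin n)).powerset.filter Finset.Nonempty,
        f I * Set.indicator (⋂ i ∈ I, A i) (fun _ => (1 : ℝ)) s ≤ 1) ∧
    (0 ≤ ∑ I ∈ (univ : Finset (Fin n)).powerset.filter Finset.Nonempty,
        (-1 : ℝ) ^ (I.card + 1) * Set.indicator (⋂ i ∈ I, A i) (fun _ => (1 : ℝ)) s ∧
      ∑ I ∈ (univ : Finset (Fin n)).powerset.filter Finset.Nonempty,
        (-1 : ℝ) ^ (I.card + 1) * Set.indicator (⋂ i ∈ I, A i) (fun _ => (1 : ℝ)) s ≤ 1) :=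
  ⟨IsBellValuation.sum_mul_indicator_biInter_mem_Icc (f := f) hf A s,
    isBellValuation_neg_one_pow_card_succ.sum_mul_indicator_biInter_mem_Icc A s⟩

/-- for indicator functions of sets `A i` in a field of subsets of `S`
(a Boolean algebra of S-probabilities), every Bell valuation `f` yields the Bell-type
inequality `0 ≤ ∑_{∅≠I⊆N} f(I)·p_I ≤ 1` pointwise, where `p_I` is the indicator of
`⋂_{i∈I} A i`. The special case `f = ∑` of all elementary Bell valuations, where
`f(I) = (-1)^{|I|+1}`, is included as the second conjunct. -/
theorem stmt_7 {S : Type*} (n : ℕ) (hn : 1 ≤ n) (A : Fin n → Set S)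
    (f : Finset (Fin n) → ℝ)
    (hf : ∀ K : Finset (Fin n), K.Nonempty →
      0 ≤ ∑ J ∈ K.powerset.filter Finset.Nonempty, f J ∧
      ∑ J ∈ K.powerset.filter Finset.Nonempty, f J ≤ 1)
    (s : S) :
    (0 ≤ ∑ I ∈ (univ : Finset (Fin n)).powerset.filter Finset.Nonempty,
        f I * Set.indicator (⋂ i ∈ I, A i) (fun _ => (1 : ℝ)) s ∧
      ∑ I ∈ (univ : Finset (Fin n)).powerset.filter Finset.Nonempty,
        f I * Set.indicator (⋂ i ∈ I, A i) (fun _ => (1 : ℝ)) s ≤ 1) ∧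
    (0 ≤ ∑ I ∈ (univ : Finset (Fin n)).powerset.filter Finset.Nonempty,
        (-1 : ℝ) ^ (I.card + 1) * Set.indicator (⋂ i ∈ I, A i) (fun _ => (1 : ℝ)) s ∧
      ∑ I ∈ (univ : Finset (Fin n)).powerset.filter Finset.Nonempty,
        (-1 : ℝ) ^ (I.card + 1) * Set.indicator (⋂ i ∈ I, A i) (fun _ => (1 : ℝ)) s ≤ 1) :=
  stmt_7_general n A f hf s
end

section
/- Let P be a set of functions S → {0,1}. For f, g ∈ P, there exists a ∈ P with a ≤ f ≤ a + g ≤ 1 if and only if there exists b ∈ P with b ≤ f ≤ b + (1−g) ≤ 1. Equivalently, the pointwise minimum f ⊼ g' belongs to P iff the pointwise minimum f ⊼ g belongs to P, provided P is closed under p ↦ 1−p and p,q ↦ p+q for orthogonal p ≤ 1−q. -/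
/-!
Pointwise, the conditions `a ≤ f ≤ a + g ≤ 1` on `{0,1}`-valued functions pin `a` down to
`f ⊼ g'`, so a witness exists iff `f ⊼ g' ∈ P`. For the second part, `f'` and `f ⊼ g'` are
orthogonal and the complement of their sum is `f ⊼ g`; applying this to `g` and to `g'`
gives both implications.
-/

section ZeroOne

variable {x y a : ℝ}

theorem le_le_add_le_one_iff_eq_min (hx : x = 0 ∨ x = 1) (hy : y = 0 ∨ y = 1)
    (ha : a = 0 ∨ a = 1) : (a ≤ x ∧ x ≤ a + y ∧ a + y ≤ 1) ↔ a = min x (1 - y) := by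
  rcases hx with rfl | rfl <;> rcases hy with rfl | rfl <;> rcases ha with rfl | rfl <;> norm_num

theorem min_eq_one_sub_one_sub_add_min_one_sub (hx : x = 0 ∨ x = 1) (hy : y = 0 ∨ y = 1) :
    min x y = 1 - ((1 - x) + min x (1 - y)) := by
  rcases hx with rfl | rfl <;> rcases hy with rfl | rfl <;> norm_num

end ZeroOne

section FieldOfEvents

variable {S : Type*} {P : Set (S → ℝ)} {f h : S → ℝ}

theorem exists_between_add_iff_min_one_sub_mem (hval : ∀ p ∈ P, ∀ s, p s = 0 ∨ p s = 1)
    (hf : f ∈ P) (hh : h ∈ P) :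
    (∃ a ∈ P, (∀ s, a s ≤ f s) ∧ (∀ s, f s ≤ a s + h s) ∧ (∀ s, a s + h s ≤ 1)) ↔
      (fun s => min (f s) (1 - h s)) ∈ P := by
  have hwit : ∀ a ∈ P, ((∀ s, a s ≤ f s) ∧ (∀ s, f s ≤ a s + h s) ∧ (∀ s, a s + h s ≤ 1)) ↔
      a = fun s => min (f s) (1 - h s) := fun a ha => by
    simp only [funext_iff, ← forall_and]
    exact forall_congr' fun s =>
      le_le_add_le_one_iff_eq_min (hval f hf s) (hval h hh s) (hval a ha s)
  constructor
  · rintro ⟨a, ha, hbetween⟩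
    exact (hwit a ha).1 hbetween ▸ ha
  · intro hmin
    exact ⟨_, hmin, (hwit _ hmin).2 rfl⟩

theorem min_mem_of_min_one_sub_mem (hval : ∀ p ∈ P, ∀ s, p s = 0 ∨ p s = 1)
    (hc : ∀ p ∈ P, (fun s => 1 - p s) ∈ P)
    (hsum : ∀ p ∈ P, ∀ q ∈ P, (∀ s, p s ≤ 1 - q s) → (fun s => p s + q s) ∈ P)
    (hf : f ∈ P) (hh : h ∈ P) (hmin : (fun s => min (f s) (1 - h s)) ∈ P) :
    (fun s => min (f s) (h s)) ∈ P := by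
  have horth : ∀ s, 1 - f s ≤ 1 - min (f s) (1 - h s) := fun s => by
    linarith [min_le_left (f s) (1 - h s)]
  convert hc _ (hsum _ (hc f hf) _ hmin horth) using 1
  exact funext fun s => min_eq_one_sub_one_sub_add_min_one_sub (hval f hf s) (hval h hh s)

theorem min_one_sub_mem_iff_min_mem (hval : ∀ p ∈ P, ∀ s, p s = 0 ∨ p s = 1)
    (hc : ∀ p ∈ P, (fun s => 1 - p s) ∈ P)
    (hsum : ∀ p ∈ P, ∀ q ∈ P, (∀ s, p s ≤ 1 - q s) → (fun s => p s + q s) ∈ P)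
    (hf : f ∈ P) (hh : h ∈ P) :
    (fun s => min (f s) (1 - h s)) ∈ P ↔ (fun s => min (f s) (h s)) ∈ P := by
  refine ⟨min_mem_of_min_one_sub_mem hval hc hsum hf hh, fun hmin => ?_⟩
  refine min_mem_of_min_one_sub_mem hval hc hsum hf (hc h hh) ?_
  simpa only [sub_sub_cancel] using hmin

end FieldOfEvents

theorem stmt_12_general {S : Type*} (P : Set (S → ℝ))
    (hval : ∀ p ∈ P, ∀ s, p s = 0 ∨ p s = 1)
    (hc : ∀ p ∈ P, (fun s => 1 - p s) ∈ P)
    (hsum : ∀ p ∈ P, ∀ q ∈ P, (∀ s, p s ≤ 1 - q s) → (fun s => p s + q s) ∈ P)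
    (f g : S → ℝ) (hf : f ∈ P) (hg : g ∈ P) :
    ((∃ a ∈ P, (∀ s, a s ≤ f s) ∧ (∀ s, f s ≤ a s + g s) ∧ (∀ s, a s + g s ≤ 1)) ↔
      (∃ b ∈ P, (∀ s, b s ≤ f s) ∧ (∀ s, f s ≤ b s + (1 - g s)) ∧
        (∀ s, b s + (1 - g s) ≤ 1))) ∧
    ((fun s => min (f s) (1 - g s)) ∈ P ↔ (fun s => min (f s) (g s)) ∈ P) := by
  have hmin := min_one_sub_mem_iff_min_mem hval hc hsum hf hg
  refine ⟨?_, hmin⟩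
  rw [exists_between_add_iff_min_one_sub_mem hval hf hg,
    exists_between_add_iff_min_one_sub_mem hval hf (hc g hg), hmin]
  simp only [sub_sub_cancel]

/-- in a generalized field of events `P` of `{0,1}`-valued functions
(`0 ∈ P`, closed under complement and under sums of orthogonal elements), for
`f, g ∈ P` there is a witness `a ∈ P` with `a ≤ f ≤ a + g ≤ 1` iff there is a
witness `b ∈ P` with `b ≤ f ≤ b + g' ≤ 1`; equivalently, `f ⊼ g' ∈ P` iff
`f ⊼ g ∈ P` (pointwise minima). -/
theorem stmt_12 {S : Type*} (P : Set (S → ℝ))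
    (hval : ∀ p ∈ P, ∀ s, p s = 0 ∨ p s = 1)
    (h0 : (fun _ => (0 : ℝ)) ∈ P)
    (hc : ∀ p ∈ P, (fun s => 1 - p s) ∈ P)
    (hsum : ∀ p ∈ P, ∀ q ∈ P, (∀ s, p s ≤ 1 - q s) → (fun s => p s + q s) ∈ P)
    (f g : S → ℝ) (hf : f ∈ P) (hg : g ∈ P) :
    ((∃ a ∈ P, (∀ s, a s ≤ f s) ∧ (∀ s, f s ≤ a s + g s) ∧ (∀ s, a s + g s ≤ 1)) ↔
      (∃ b ∈ P, (∀ s, b s ≤ f s) ∧ (∀ s, f s ≤ b s + (1 - g s)) ∧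
        (∀ s, b s + (1 - g s) ≤ 1))) ∧
    ((fun s => min (f s) (1 - g s)) ∈ P ↔ (fun s => min (f s) (g s)) ∈ P) :=
  stmt_12_general P hval hc hsum f g hf hg
end
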